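/- arXiv:2604.16689 — 2 statements merged into one kernel-verified Lean document; each statement's English description precedes it below -/
import Mathlib

section
/- Let σ > 0, T ≥ 1, and let ε = (ε_1, …, ε_T) be distributed according to the product measure ⊗_{t=1}^T gaussianReal 0 σ² on ℝ^T. Let c, c' ∈ ℝ^T with c ≠ c'. Then the pairwise minimum-distance error probability satisfies P( ‖(c + ε) − c'‖ ≤ ‖ε‖ ) ≤ exp( − ‖c − c'‖² / (8σ²) ), where ‖·‖ denotes the Euclidean norm on ℝ^T. -/
open MeasureTheory ProbabilityTheory Real Filter
open scoped NNReal ENNReal Topology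

noncomputable section

/-- The Euclidean norm on `ℝ^T` (realized as `Fin T → ℝ`). -/
def euclNorm {T : ℕ} (x : Fin T → ℝ) : ℝ :=
  Real.sqrt (∑ t, (x t) ^ 2)

lemma exp_mul_gaussianPDFReal (b : ℝ) {v : ℝ≥0} (hv : v ≠ 0) (x : ℝ) :
    rexp (b * x) * gaussianPDFReal 0 v x
      = rexp (b ^ 2 * v / 2) * gaussianPDFReal (b * v) v x := by
  have hv' : (v : ℝ) ≠ 0 := NNReal.coe_ne_zero.mpr hv
  simp only [gaussianPDFReal, sub_zero]
  rw [mul_left_comm, mul_left_comm (rexp _), ← Real.exp_add, ← Real.exp_add]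
  congr 2
  field_simp
  ring

lemma integrable_exp_mul_gaussianReal (b : ℝ) {v : ℝ≥0} (hv : v ≠ 0) :
    Integrable (fun x => rexp (b * x)) (gaussianReal 0 v) := by
  rw [gaussianReal_of_var_ne_zero _ hv, gaussianPDF_def]
  have h : (fun x => ENNReal.ofReal (gaussianPDFReal 0 v x))
      = fun x => ((gaussianPDFReal 0 v x).toNNReal : ℝ≥0∞) := rfl
  rw [h, integrable_withDensity_iff_integrable_smul
    ((measurable_gaussianPDFReal 0 v).real_toNNReal)]
  have : (fun x => (gaussianPDFReal 0 v x).toNNReal • rexp (b * x))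
      = fun x => rexp (b ^ 2 * v / 2) * gaussianPDFReal (b * v) v x := by
    ext x
    rw [NNReal.smul_def, Real.coe_toNNReal _ (gaussianPDFReal_nonneg 0 v x), smul_eq_mul,
      mul_comm, exp_mul_gaussianPDFReal b hv x]
  rw [this]
  exact (integrable_gaussianPDFReal (b * v) v).const_mul _

lemma integral_exp_mul_gaussianReal (b : ℝ) {v : ℝ≥0} (hv : v ≠ 0) :
    ∫ x, rexp (b * x) ∂(gaussianReal 0 v) = rexp (b ^ 2 * v / 2) := by
  rw [gaussianReal_of_var_ne_zero _ hv, gaussianPDF_def]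
  have h : (fun x => ENNReal.ofReal (gaussianPDFReal 0 v x))
      = fun x => ((gaussianPDFReal 0 v x).toNNReal : ℝ≥0∞) := rfl
  rw [h, integral_withDensity_eq_integral_smul
    ((measurable_gaussianPDFReal 0 v).real_toNNReal)]
  have : (fun x => (gaussianPDFReal 0 v x).toNNReal • rexp (b * x))
      = fun x => rexp (b ^ 2 * v / 2) * gaussianPDFReal (b * v) v x := by
    ext x
    rw [NNReal.smul_def, Real.coe_toNNReal _ (gaussianPDFReal_nonneg 0 v x), smul_eq_mul,
      mul_comm, exp_mul_gaussianPDFReal b hv x]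
  rw [this, integral_const_mul, integral_gaussianPDFReal_eq_one _ hv, mul_one]

/-- **Pairwise minimum-distance error bound.** Let `σ > 0`, `T ≥ 1`, and let
`ε` be distributed according to `⊗_{t=1}^T gaussianReal 0 σ²` on `ℝ^T`. For `c ≠ c'` in `ℝ^T`,
`P( ‖(c + ε) − c'‖ ≤ ‖ε‖ ) ≤ exp( − ‖c − c'‖² / (8σ²) )`. -/
theorem pairwise_min_distance_error_bound
    (σ : ℝ≥0) (hσ : 0 < σ) (T : ℕ) (hT : 1 ≤ T)
    (c c' : Fin T → ℝ) (hcc : c ≠ c') :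
    (Measure.pi fun _ : Fin T => gaussianReal 0 (σ ^ 2))
        {ε | euclNorm (fun t => (c t + ε t) - c' t) ≤ euclNorm ε}
      ≤ ENNReal.ofReal
          (Real.exp (-(euclNorm (fun t => c t - c' t)) ^ 2 / (8 * (σ : ℝ) ^ 2))) := by
  set v : ℝ≥0 := σ ^ 2 with hv_def
  have hv : v ≠ 0 := pow_ne_zero _ hσ.ne'
  have hv' : (0 : ℝ) < v := by positivity
  set d : Fin T → ℝ := fun t => c t - c' t with hd_def
  set K : ℝ := ∑ t, d t ^ 2 with hK_def
  have hK : 0 < K := by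
    obtain ⟨t0, ht0⟩ : ∃ t, d t ≠ 0 := by
      by_contra h
      push_neg at h
      exact hcc (funext fun t => by have := h t; simp only [hd_def] at this; linarith [sub_eq_zero.mp this])
    exact Finset.sum_pos' (fun i _ => sq_nonneg _)
      ⟨t0, Finset.mem_univ _, by positivity⟩
  -- set-up the measure space
  letI : MeasureSpace ℝ := ⟨gaussianReal 0 v⟩
  haveI : IsProbabilityMeasure (volume : Measure ℝ) :=
    inferInstanceAs (IsProbabilityMeasure (gaussianReal 0 v))
  set μ : Measure (Fin T → ℝ) := Measure.pi fun _ : Fin T => gaussianReal 0 v with hμ_def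
  haveI : IsProbabilityMeasure μ := by
    rw [hμ_def]; infer_instance
  set X : (Fin T → ℝ) → ℝ := fun ω => ∑ t, d t * ω t with hX_def
  -- rewrite the event
  have hset : {ε : Fin T → ℝ | euclNorm (fun t => (c t + ε t) - c' t) ≤ euclNorm ε}
      = {ω : Fin T → ℝ | X ω ≤ -(K / 2)} := by
    ext ω
    simp only [Set.mem_setOf_eq, euclNorm]
    rw [Real.sqrt_le_sqrt_iff (by positivity)]
    have expand : ∑ t, ((c t + ω t) - c' t) ^ 2 = K + 2 * X ω + ∑ t, ω t ^ 2 := by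
      have : ∀ t : Fin T, ((c t + ω t) - c' t) ^ 2 = d t ^ 2 + 2 * (d t * ω t) + ω t ^ 2 := by
        intro t; simp only [hd_def]; ring
      rw [Finset.sum_congr rfl (fun t _ => this t), Finset.sum_add_distrib,
        Finset.sum_add_distrib, ← Finset.mul_sum]
    rw [expand]
    constructor <;> intro h <;> [linarith; linarith]
  rw [hset]
  -- Chernoff bound
  set t : ℝ := -(1 / (2 * (v : ℝ))) with ht_def
  have ht : t ≤ 0 := by
    rw [ht_def]; simp only [neg_nonpos]; positivity
  have h_exp_eq : ∀ ω : Fin T → ℝ,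
      rexp (t * X ω) = ∏ s, rexp (t * d s * ω s) := by
    intro ω
    rw [← Real.exp_sum]
    congr 1
    rw [hX_def, Finset.mul_sum]
    exact Finset.sum_congr rfl fun s _ => by ring
  have h_int : Integrable (fun ω => rexp (t * X ω)) μ := by
    simp only [h_exp_eq]
    exact MeasureTheory.Integrable.fintype_prod (𝕜 := ℝ)
      (f := fun s x => rexp (t * d s * x))
      (fun s => integrable_exp_mul_gaussianReal _ hv)
  have hmgf : mgf X μ t = rexp (t ^ 2 * v * K / 2) := by
    rw [mgf]
    simp only [h_exp_eq]
    rw [show μ = (volume : Measure (Fin T → ℝ)) from rfl]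
    rw [show (volume : Measure (Fin T → ℝ)) = Measure.pi (fun _ => (volume : Measure ℝ)) from rfl,
      MeasureTheory.integral_fintype_prod_eq_prod (𝕜 := ℝ) (ι := Fin T)
      (f := fun s x => rexp (t * d s * x))]
    have : ∀ s : Fin T, (∫ x, rexp (t * d s * x)) = rexp ((t * d s) ^ 2 * v / 2) :=
      fun s => integral_exp_mul_gaussianReal _ hv
    rw [Finset.prod_congr rfl (fun s _ => this s), ← Real.exp_sum]
    congr 1
    rw [Finset.sum_congr rfl
      (fun s _ => show (t * d s) ^ 2 * (v : ℝ) / 2 = (t ^ 2 * v / 2) * d s ^ 2 by ring),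
      ← Finset.mul_sum, ← hK_def]
    ring
  have hchernoff := measure_le_le_exp_mul_mgf (μ := μ) (X := X) (-(K / 2)) ht h_int
  rw [hmgf] at hchernoff
  have hbound : rexp (-t * -(K / 2)) * rexp (t ^ 2 * v * K / 2)
      = rexp (-K / (8 * (v : ℝ))) := by
    rw [← Real.exp_add]
    congr 1
    rw [ht_def]
    field_simp
    ring
  rw [hbound] at hchernoff
  have hKnorm : (euclNorm (fun t => c t - c' t)) ^ 2 = K := by
    rw [euclNorm, Real.sq_sqrt (by positivity)]
  have hfin : μ {ω | X ω ≤ -(K / 2)} ≠ ⊤ := measure_ne_top _ _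
  calc μ {ω | X ω ≤ -(K / 2)}
      = ENNReal.ofReal ((μ {ω | X ω ≤ -(K / 2)}).toReal) := (ENNReal.ofReal_toReal hfin).symm
    _ ≤ ENNReal.ofReal (rexp (-K / (8 * (v : ℝ)))) := ENNReal.ofReal_le_ofReal hchernoff
    _ = _ := by
        congr 1
        rw [hKnorm]
        congr 1

end
end

section
/- Let σ > 0, T ≥ 1, N ≥ 2, and let c_1, …, c_N ∈ ℝ^T be codewords satisfying ‖c_i − c_j‖² ≥ γ for all i ≠ j, where γ > 0. Let ε = (ε_1, …, ε_T) be distributed according to the product measure ⊗_{t=1}^T gaussianReal 0 σ² on ℝ^T. Then for every index i, the minimum-distance decoding error probability satisfies P( ∃ j ≠ i such that ‖(c_i + ε) − c_j‖ ≤ ‖ε‖ ) ≤ (N − 1) · exp( − γ / (8σ²) ). In particular, if γ = γ₀ T and log₂ N ≤ R T with R · ln 2 < γ₀ / (8σ²), this error probability tends to 0 as T → ∞. -/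
open MeasureTheory ProbabilityTheory Real Filter
open scoped NNReal ENNReal Topology

noncomputable section

/-- The minimum-distance decoding error probability for codeword `i` of the codebook `c` over the
Gaussian noise channel with per-coordinate variance `σ²`: the probability that some competing
codeword `c j`, `j ≠ i`, is at least as close to `c i + ε` as the true codeword `c i` is. -/
def mdErrorProb (σ : ℝ≥0) (T : ℕ) {N : ℕ} (c : Fin N → Fin T → ℝ) (i : Fin N) : ℝ≥0∞ :=
  (Measure.pi fun _ : Fin T => gaussianReal 0 (σ ^ 2))
    {ε | ∃ j, j ≠ i ∧ euclNorm (fun t => (c i t + ε t) - c j t) ≤ euclNorm ε}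

/-- Fubini for lower integrals of products over a finite product of probability measures. -/
lemma lintegral_pi_prod : ∀ (n : ℕ) (μ : Fin n → Measure ℝ),
    (∀ i, IsProbabilityMeasure (μ i)) → ∀ (f : Fin n → ℝ → ℝ≥0∞), (∀ i, Measurable (f i)) →
    ∫⁻ x, ∏ i, f i (x i) ∂Measure.pi μ = ∏ i, ∫⁻ y, f i y ∂μ i := by
  intro n
  induction n with
  | zero =>
    intro μ hμ f hf
    simp [lintegral_const, Measure.pi_univ]
  | succ n ih =>
    intro μ hμ f hf
    calc ∫⁻ x, ∏ i, f i (x i) ∂Measure.pi μ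
        = ∫⁻ p : ℝ × (Fin n → ℝ), f 0 p.1 * ∏ j : Fin n, f (Fin.succ j) (p.2 j)
            ∂((μ 0).prod (Measure.pi fun j => μ ((0 : Fin (n+1)).succAbove j))) := by
          rw [MeasurePreserving.lintegral_map_equiv (fun x => ∏ i, f i (x i))
            (MeasurableEquiv.piFinSuccAbove (fun _ : Fin (n+1) => ℝ) 0).symm
            (MeasurePreserving.symm _ (measurePreserving_piFinSuccAbove μ 0))]
          congr 1; ext p
          simp_rw [MeasurableEquiv.piFinSuccAbove_symm_apply, Fin.insertNthEquiv, Equiv.coe_fn_mk,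
            Fin.insertNth_zero, Fin.prod_univ_succ, Fin.cons_zero, Fin.cons_succ, cast_eq]
      _ = (∫⁻ y, f 0 y ∂μ 0) * ∏ j : Fin n, ∫⁻ y, f (Fin.succ j) y ∂μ (Fin.succ j) := by
          have h := lintegral_prod_mul (μ := μ 0)
            (ν := Measure.pi fun j : Fin n => μ ((0 : Fin (n+1)).succAbove j))
            (f := f 0) (g := fun y : Fin n → ℝ => ∏ j : Fin n, f (Fin.succ j) (y j))
            (hf 0).aemeasurable
            (Finset.measurable_prod Finset.univ fun j _ =>
              (hf _).comp (measurable_pi_apply j)).aemeasurable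
          simp only [Fin.zero_succAbove] at h ⊢
          rw [h, ih _ (fun j => hμ _) _ (fun j => hf _)]
      _ = ∏ i, ∫⁻ y, f i y ∂μ i := (Fin.prod_univ_succ (fun i => ∫⁻ y, f i y ∂μ i)).symm

/-- The moment generating function of a centered Gaussian, as a lower integral. -/
lemma lintegral_exp_gauss (v : ℝ≥0) (hv : v ≠ 0) (a : ℝ) :
    ∫⁻ x, ENNReal.ofReal (Real.exp (a * x)) ∂gaussianReal 0 v
      = ENNReal.ofReal (Real.exp (a ^ 2 * v / 2)) := by
  have hvR : (0 : ℝ) < (v : ℝ) := by positivity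
  rw [gaussianReal_of_var_ne_zero _ hv,
    lintegral_withDensity_eq_lintegral_mul _ (measurable_gaussianPDF _ _)
      (by fun_prop)]
  have hpt : ∀ x : ℝ, (gaussianPDF 0 v * fun x => ENNReal.ofReal (Real.exp (a * x))) x
      = ENNReal.ofReal (Real.exp (a ^ 2 * v / 2)) * gaussianPDF (a * v) v x := by
    intro x
    simp only [Pi.mul_apply, gaussianPDF]
    rw [← ENNReal.ofReal_mul (gaussianPDFReal_nonneg _ _ _),
        ← ENNReal.ofReal_mul (Real.exp_nonneg _)]
    congr 1
    have hexp : rexp (-(x - 0) ^ 2 / (2 * v)) * rexp (a * x)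
        = rexp (a ^ 2 * v / 2) * rexp (-(x - a * v) ^ 2 / (2 * v)) := by
      rw [← Real.exp_add, ← Real.exp_add]
      congr 1
      field_simp
      ring
    calc gaussianPDFReal 0 v x * rexp (a * x)
        = (√(2 * π * v))⁻¹ * (rexp (-(x - 0) ^ 2 / (2 * v)) * rexp (a * x)) := by
          unfold gaussianPDFReal; ring
      _ = rexp (a ^ 2 * v / 2) * gaussianPDFReal (a * v) v x := by
          rw [hexp]; unfold gaussianPDFReal; ring
  simp_rw [hpt]
  rw [lintegral_const_mul _ (measurable_gaussianPDF _ _), lintegral_gaussianPDF_eq_one _ hv,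
    mul_one]

/-- Chernoff bound for a linear functional of i.i.d. centered Gaussians. -/
lemma gauss_tail (v : ℝ≥0) (hv : v ≠ 0) {T : ℕ} (d : Fin T → ℝ) :
    (Measure.pi fun _ : Fin T => gaussianReal 0 v)
      {ε | ∑ t, d t * ε t ≤ -(∑ t, d t ^ 2) / 2}
    ≤ ENNReal.ofReal (Real.exp (-(∑ t, d t ^ 2) / (8 * v))) := by
  have hvR : (0 : ℝ) < (v : ℝ) := by positivity
  set a : ℝ := ∑ t, d t ^ 2 with ha
  have ha0 : 0 ≤ a := Finset.sum_nonneg fun t _ => sq_nonneg _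
  set μ := Measure.pi fun _ : Fin T => gaussianReal 0 v with hμ
  set k : ℝ := (2 * v)⁻¹ with hk
  have hk0 : 0 < k := by positivity
  set f : (Fin T → ℝ) → ℝ≥0∞ := fun ε => ENNReal.ofReal (Real.exp (-k * ∑ t, d t * ε t)) with hf
  have hmeas : Measurable f := by
    apply Measurable.ennreal_ofReal
    apply Real.measurable_exp.comp
    apply Measurable.const_mul
    exact Finset.measurable_sum _ fun t _ => (measurable_pi_apply t).const_mul _
  have hint : ∫⁻ ε, f ε ∂μ = ENNReal.ofReal (Real.exp (k ^ 2 * a * v / 2)) := by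
    have h1 : ∀ ε : Fin T → ℝ, f ε = ∏ t, ENNReal.ofReal (Real.exp (-k * d t * ε t)) := by
      intro ε
      rw [hf]
      simp only
      rw [Finset.mul_sum, Real.exp_sum, ← ENNReal.ofReal_prod_of_nonneg
        (fun t _ => Real.exp_nonneg _)]
      congr 1
      exact Finset.prod_congr rfl fun t _ => by rw [mul_assoc]
    simp_rw [h1]
    rw [hμ, lintegral_pi_prod T (fun _ => gaussianReal 0 v) (fun _ => inferInstance)
      (fun t x => ENNReal.ofReal (Real.exp (-k * d t * x))) (fun t => by fun_prop)]
    simp_rw [lintegral_exp_gauss v hv]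
    rw [← ENNReal.ofReal_prod_of_nonneg (fun t _ => Real.exp_nonneg _), ← Real.exp_sum]
    congr 2
    rw [← Finset.sum_div, ← Finset.sum_mul]
    congr 2
    rw [ha, Finset.mul_sum]
    exact Finset.sum_congr rfl fun t _ => by ring
  have hsub : {ε : Fin T → ℝ | ∑ t, d t * ε t ≤ -a / 2}
      ⊆ {ε : Fin T → ℝ | ENNReal.ofReal (Real.exp (k * a / 2)) ≤ f ε} := by
    intro ε hε
    simp only [Set.mem_setOf_eq] at hε ⊢
    apply ENNReal.ofReal_le_ofReal
    apply Real.exp_le_exp.mpr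
    nlinarith [hε, hk0]
  have hmarkov := mul_meas_ge_le_lintegral₀ (μ := μ) hmeas.aemeasurable
    (ENNReal.ofReal (Real.exp (k * a / 2)))
  have hμle : μ {ε | ∑ t, d t * ε t ≤ -a / 2}
      ≤ μ {ε | ENNReal.ofReal (Real.exp (k * a / 2)) ≤ f ε} := measure_mono hsub
  have hne : ENNReal.ofReal (Real.exp (k * a / 2)) ≠ 0 := by
    simp [Real.exp_pos]
  have hnt : ENNReal.ofReal (Real.exp (k * a / 2)) ≠ ⊤ := ENNReal.ofReal_ne_top
  have hdiv : μ {ε | ∑ t, d t * ε t ≤ -a / 2}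
      ≤ ENNReal.ofReal (Real.exp (k ^ 2 * a * v / 2)) / ENNReal.ofReal (Real.exp (k * a / 2)) := by
    rw [ENNReal.le_div_iff_mul_le (Or.inl hne) (Or.inl hnt)]
    calc μ {ε | ∑ t, d t * ε t ≤ -a / 2} * ENNReal.ofReal (Real.exp (k * a / 2))
        = ENNReal.ofReal (Real.exp (k * a / 2)) * μ {ε | ∑ t, d t * ε t ≤ -a / 2} := mul_comm _ _
      _ ≤ ENNReal.ofReal (Real.exp (k * a / 2)) *
            μ {ε | ENNReal.ofReal (Real.exp (k * a / 2)) ≤ f ε} := by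
          exact mul_le_mul_right hμle _
      _ ≤ ∫⁻ ε, f ε ∂μ := hmarkov
      _ = _ := hint
  refine hdiv.trans ?_
  rw [← ENNReal.ofReal_div_of_pos (Real.exp_pos _), ← Real.exp_sub]
  apply ENNReal.ofReal_le_ofReal
  apply Real.exp_le_exp.mpr
  have : k ^ 2 * a * v / 2 - k * a / 2 = -a / (8 * v) := by
    rw [hk]
    field_simp
    ring
  rw [this]

/-- Part 1: the union bound. -/
lemma part1 (σ : ℝ≥0) (hσ : 0 < σ) (T N : ℕ) (hT : 1 ≤ T) (hN : 2 ≤ N) (γ : ℝ) (hγ : 0 < γ)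
    (c : Fin N → Fin T → ℝ)
    (hc : ∀ i j, i ≠ j → γ ≤ (euclNorm (fun t => c i t - c j t)) ^ 2) (i : Fin N) :
    mdErrorProb σ T c i ≤
      ENNReal.ofReal (((N : ℝ) - 1) * Real.exp (-γ / (8 * (σ : ℝ) ^ 2))) := by
  have hv : (σ ^ 2 : ℝ≥0) ≠ 0 := pow_ne_zero _ hσ.ne'
  have hvR : ((σ ^ 2 : ℝ≥0) : ℝ) = (σ : ℝ) ^ 2 := by push_cast; ring
  set μ := Measure.pi fun _ : Fin T => gaussianReal 0 (σ ^ 2) with hμ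
  set E : Fin N → Set (Fin T → ℝ) := fun j =>
    {ε | ∑ t, (c i t - c j t) * ε t ≤ -(∑ t, (c i t - c j t) ^ 2) / 2} with hE
  have hsub : {ε : Fin T → ℝ | ∃ j, j ≠ i ∧
      euclNorm (fun t => (c i t + ε t) - c j t) ≤ euclNorm ε}
      ⊆ ⋃ j ∈ Finset.univ.erase i, E j := by
    rintro ε ⟨j, hj, hle⟩
    refine Set.mem_biUnion (Finset.mem_erase.mpr ⟨hj, Finset.mem_univ j⟩) ?_
    have hnn : 0 ≤ ∑ t, ((c i t + ε t) - c j t) ^ 2 := Finset.sum_nonneg fun t _ => sq_nonneg _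
    have hnn2 : 0 ≤ ∑ t, (ε t) ^ 2 := Finset.sum_nonneg fun t _ => sq_nonneg _
    have hsq : ∑ t, ((c i t + ε t) - c j t) ^ 2 ≤ ∑ t, (ε t) ^ 2 := by
      have h1 : euclNorm (fun t => (c i t + ε t) - c j t) ^ 2 ≤ euclNorm ε ^ 2 :=
        pow_le_pow_left₀ (Real.sqrt_nonneg _) hle 2
      rwa [euclNorm, euclNorm, Real.sq_sqrt hnn, Real.sq_sqrt hnn2] at h1
    have hexp : ∑ t, ((c i t + ε t) - c j t) ^ 2
        = ∑ t, (c i t - c j t) ^ 2 + 2 * ∑ t, (c i t - c j t) * ε t + ∑ t, (ε t) ^ 2 := by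
      rw [Finset.mul_sum, ← Finset.sum_add_distrib, ← Finset.sum_add_distrib]
      exact Finset.sum_congr rfl fun t _ => by ring
    simp only [hE, Set.mem_setOf_eq]
    linarith
  have hEbound : ∀ j : Fin N, j ∈ Finset.univ.erase i →
      μ (E j) ≤ ENNReal.ofReal (Real.exp (-γ / (8 * (σ : ℝ) ^ 2))) := by
    intro j hj
    have hji : j ≠ i := (Finset.mem_erase.mp hj).1
    refine (gauss_tail (σ ^ 2) hv (fun t => c i t - c j t)).trans ?_
    apply ENNReal.ofReal_le_ofReal
    apply Real.exp_le_exp.mpr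
    rw [hvR]
    have hγle : γ ≤ ∑ t, (c i t - c j t) ^ 2 := by
      have h := hc i j (Ne.symm hji)
      rwa [euclNorm, Real.sq_sqrt (Finset.sum_nonneg fun t _ => sq_nonneg _)] at h
    gcongr
  calc mdErrorProb σ T c i ≤ μ (⋃ j ∈ Finset.univ.erase i, E j) := measure_mono hsub
    _ ≤ ∑ j ∈ Finset.univ.erase i, μ (E j) := measure_biUnion_finset_le _ _
    _ ≤ ∑ _j ∈ Finset.univ.erase i,
          ENNReal.ofReal (Real.exp (-γ / (8 * (σ : ℝ) ^ 2))) := Finset.sum_le_sum hEbound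
    _ = ((N - 1 : ℕ) : ℝ≥0∞) * ENNReal.ofReal (Real.exp (-γ / (8 * (σ : ℝ) ^ 2))) := by
        rw [Finset.sum_const, Finset.card_erase_of_mem (Finset.mem_univ i), Finset.card_univ,
          Fintype.card_fin, nsmul_eq_mul]
    _ = ENNReal.ofReal (((N : ℝ) - 1) * Real.exp (-γ / (8 * (σ : ℝ) ^ 2))) := by
        rw [← ENNReal.ofReal_natCast, ← ENNReal.ofReal_mul (by positivity)]
        congr 2
        push_cast [Nat.cast_sub (le_trans one_le_two hN)]
        ring

/-- **Union bound for minimum-distance decoding, and vanishing error below the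
exponent.** If `σ > 0`, `T ≥ 1`, `N ≥ 2`, and the codewords `c_1,…,c_N ∈ ℝ^T` satisfy
`‖c_i − c_j‖² ≥ γ > 0` for `i ≠ j`, then for every `i` the minimum-distance decoding error
probability is at most `(N − 1)·exp(−γ/(8σ²))`. In particular, for a family of codebooks with
`γ = γ₀·T`, `log₂ N ≤ R·T` and `R·ln 2 < γ₀/(8σ²)`, the error probability tends to `0` as
`T → ∞`. -/
theorem min_distance_decoding_error_bound :
    (∀ (σ : ℝ≥0), 0 < σ → ∀ (T N : ℕ), 1 ≤ T → 2 ≤ N → ∀ (γ : ℝ), 0 < γ →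
      ∀ (c : Fin N → Fin T → ℝ),
        (∀ i j, i ≠ j → γ ≤ (euclNorm (fun t => c i t - c j t)) ^ 2) →
        ∀ i : Fin N,
          mdErrorProb σ T c i ≤
            ENNReal.ofReal (((N : ℝ) - 1) * Real.exp (-γ / (8 * (σ : ℝ) ^ 2))))
    ∧
    (∀ (σ : ℝ≥0), 0 < σ → ∀ (γ₀ R : ℝ), 0 < γ₀ →
      R * Real.log 2 < γ₀ / (8 * (σ : ℝ) ^ 2) →
      ∀ (N : ℕ → ℕ) (c : (T : ℕ) → Fin (N T) → Fin T → ℝ) (i : (T : ℕ) → Fin (N T)),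
        (∀ T : ℕ, 1 ≤ T → 2 ≤ N T) →
        (∀ T : ℕ, 1 ≤ T → ∀ j k, j ≠ k →
          γ₀ * (T : ℝ) ≤ (euclNorm (fun t => c T j t - c T k t)) ^ 2) →
        (∀ T : ℕ, 1 ≤ T → Real.logb 2 (N T) ≤ R * (T : ℝ)) →
        Filter.Tendsto (fun T : ℕ => mdErrorProb σ T (c T) (i T))
          Filter.atTop (nhds (0 : ℝ≥0∞))) := by
  constructor
  · exact part1
  · intro σ hσ γ₀ R hγ₀ hR N c i hN hc hlog
    have hσR : (0 : ℝ) < (σ : ℝ) := hσ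
    set δ : ℝ := γ₀ / (8 * (σ : ℝ) ^ 2) - R * Real.log 2 with hδ
    have hδ0 : 0 < δ := by simp only [hδ]; linarith
    set u : ℕ → ℝ≥0∞ := fun T => ENNReal.ofReal (Real.exp (-δ) ^ T) with hu
    have hub : ∀ᶠ T : ℕ in atTop, mdErrorProb σ T (c T) (i T) ≤ u T := by
      filter_upwards [eventually_ge_atTop 1] with T hT
      have hNT := hN T hT
      have hTc : (0 : ℝ) < (T : ℝ) := by exact_mod_cast hT
      have h1 := part1 σ hσ T (N T) hT hNT (γ₀ * T) (by positivity) (c T) (hc T hT) (i T)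
      refine h1.trans ?_
      apply ENNReal.ofReal_le_ofReal
      have hNle : (N T : ℝ) ≤ Real.exp (R * T * Real.log 2) := by
        have hN0 : (0 : ℝ) < (N T : ℝ) := by positivity
        have h2 : (N T : ℝ) = (2 : ℝ) ^ (Real.logb 2 (N T)) :=
          (Real.rpow_logb (by norm_num) (by norm_num) hN0).symm
        rw [h2, Real.rpow_def_of_pos (by norm_num : (0:ℝ) < 2)]
        apply Real.exp_le_exp.mpr
        calc Real.log 2 * Real.logb 2 (N T) ≤ Real.log 2 * (R * T) := by
              apply mul_le_mul_of_nonneg_left (hlog T hT) (Real.log_nonneg one_le_two)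
          _ = R * T * Real.log 2 := by ring
      calc ((N T : ℝ) - 1) * Real.exp (-(γ₀ * T) / (8 * (σ : ℝ) ^ 2))
          ≤ Real.exp (R * T * Real.log 2) * Real.exp (-(γ₀ * T) / (8 * (σ : ℝ) ^ 2)) := by
            apply mul_le_mul_of_nonneg_right _ (Real.exp_nonneg _)
            linarith
        _ = Real.exp (R * T * Real.log 2 + -(γ₀ * T) / (8 * (σ : ℝ) ^ 2)) :=
            (Real.exp_add _ _).symm
        _ = Real.exp (-δ * T) := by
            congr 1
            rw [hδ]
            field_simp
            ring
        _ = Real.exp (-δ) ^ T := by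
            rw [← Real.exp_nat_mul]
            congr 1
            ring
    have hu0 : Tendsto u atTop (nhds 0) := by
      rw [hu]
      have hlt1 : Real.exp (-δ) < 1 := Real.exp_lt_one_iff.mpr (by linarith)
      have := tendsto_pow_atTop_nhds_zero_of_lt_one (Real.exp_nonneg _) hlt1
      have h2 := ENNReal.tendsto_ofReal this
      simpa using h2
    exact tendsto_of_tendsto_of_tendsto_of_le_of_le' tendsto_const_nhds hu0
      (Eventually.of_forall fun T => zero_le) hub
end
end
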